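/- arXiv:0807.3593 — 2 statements merged into one kernel-verified Lean document; each statement's English description precedes it below -/
import Mathlib

section
/- Let U, V, W₁, W₂, Y₁, Y₂ be random variables on a common probability space taking values in finite sets. If I(W₂;Y₁|(V,W₁)) = I(W₁;Y₂|(V,W₂)), I(U;Y₁|(V,W₁)) = I(U;Y₁|W₁), and I(U;V|(W₁,W₂,Y₁)) = I(U;V|(W₁,W₂,Y₂)), then I(U;Y₁|W₁) + I(V;Y₂|W₂) ≤ I((W₁,W₂);Y₂) + I(U;Y₁|(W₁,W₂)) + I(V;Y₂|(U,W₁,W₂)). -/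
open MeasureTheory Real

/-- Shannon entropy (in nats) of a random variable taking values in a finite set. -/
noncomputable def entropy {Ω : Type*} [MeasurableSpace Ω] (μ : Measure Ω)
    {S : Type*} [Fintype S] (X : Ω → S) : ℝ :=
  ∑ x : S, Real.negMulLog (μ (X ⁻¹' {x})).toReal

/-- Mutual information `I(X;Y) = H(X) + H(Y) - H(X,Y)`. -/
noncomputable def mutualInfo {Ω : Type*} [MeasurableSpace Ω] (μ : Measure Ω)
    {S T : Type*} [Fintype S] [Fintype T] (X : Ω → S) (Y : Ω → T) : ℝ :=
  entropy μ X + entropy μ Y - entropy μ (fun ω => (X ω, Y ω))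

/-- Conditional mutual information `I(X;Y|Z) = H(X,Z) + H(Y,Z) - H(X,Y,Z) - H(Z)`. -/
noncomputable def condMutualInfo {Ω : Type*} [MeasurableSpace Ω] (μ : Measure Ω)
    {S T R : Type*} [Fintype S] [Fintype T] [Fintype R]
    (X : Ω → S) (Y : Ω → T) (Z : Ω → R) : ℝ :=
  entropy μ (fun ω => (X ω, Z ω)) + entropy μ (fun ω => (Y ω, Z ω))
    - entropy μ (fun ω => (X ω, Y ω, Z ω)) - entropy μ Z

/-! Everything follows from the chain rule and the nonnegativity of conditional mutual
information; the latter is Gibbs' inequality `∑ q log (q / q') ≥ ∑ q - ∑ q'`, applied on each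
fibre of the conditioning variable against the product of the two conditional marginals.

Put `Z = (W₁, W₂)`. By `h1` and the chain rule, `I(U;Y₁|W₁) ≤ I(W₂;Y₁|V,W₁) + I(U;Y₁|V,Z)`,
while `I(V;Y₂|W₂) = I(W₁;Y₂|W₂) + I(V;Y₂|Z) - I(W₁;Y₂|V,W₂)`; the correction terms cancel by `h0`,
and `I(W₁;Y₂|W₂) ≤ I(Z;Y₂)`. Expanding `I(U;V,Y₁|Z)` and `I(V;U,Y₂|Z)` in both orders shows that
`I(V;Y₂|Z) + I(U;Y₁|V,Z)` and `I(U;Y₁|Z) + I(V;Y₂|U,Z)` differ by `I(U;V|Y₁,Z) - I(U;V|Y₂,Z)`,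
which vanishes by `h2`. -/

theorem sub_le_mul_log_sub_mul_log {a b : ℝ} (ha : 0 ≤ a) (hb : 0 < b) :
    a - b ≤ a * log a - a * log b := by
  rcases ha.eq_or_lt with rfl | ha
  · simpa using hb.le
  have h := negMulLog_le_one_sub_self (div_nonneg ha.le hb.le)
  rw [negMulLog, log_div ha.ne' hb.ne'] at h
  have h' := mul_le_mul_of_nonneg_left h hb.le
  field_simp at h'
  nlinarith

theorem sum_negMulLog_add_negMulLog_sum_le {α β : Type*} [Fintype α] [Fintype β]
    (q : α → β → ℝ) (hq : ∀ x y, 0 ≤ q x y) :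
    ∑ x, ∑ y, negMulLog (q x y) + negMulLog (∑ x, ∑ y, q x y)
      ≤ ∑ x, negMulLog (∑ y, q x y) + ∑ y, negMulLog (∑ x, q x y) := by
  set r : α → ℝ := fun x => ∑ y, q x y
  set c : β → ℝ := fun y => ∑ x, q x y
  set s := ∑ x, ∑ y, q x y
  have hr : ∀ x, 0 ≤ r x := fun x => Finset.sum_nonneg fun y _ => hq x y
  have hc : ∀ y, 0 ≤ c y := fun y => Finset.sum_nonneg fun x _ => hq x y
  have hs_r : ∑ x, r x = s := rfl
  have hs_c : ∑ y, c y = s := Finset.sum_comm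
  -- Gibbs' inequality against the product of the marginals `r x * c y / s`
  have gibbs : ∀ x y, q x y - r x * c y / s
      ≤ q x y * log (q x y) + q x y * log s - q x y * log (r x) - q x y * log (c y) := by
    intro x y
    rcases (hq x y).eq_or_lt with h0 | hpos
    · rw [← h0]; simp only [zero_sub, zero_mul, sub_zero, add_zero, neg_nonpos]
      exact div_nonneg (mul_nonneg (hr x) (hc y)) (hs_r ▸ Finset.sum_nonneg fun x _ => hr x)
    have hrx : 0 < r x :=
      hpos.trans_le (Finset.single_le_sum (fun y _ => hq x y) (Finset.mem_univ y))
    have hcy : 0 < c y :=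
      hpos.trans_le (Finset.single_le_sum (fun x _ => hq x y) (Finset.mem_univ x))
    have hs : 0 < s := hrx.trans_le (Finset.single_le_sum (fun x _ => hr x) (Finset.mem_univ x))
    have := sub_le_mul_log_sub_mul_log (hq x y) (show 0 < r x * c y / s by positivity)
    rw [log_div (by positivity) hs.ne', log_mul hrx.ne' hcy.ne'] at this
    linarith
  have hsum_rc : ∑ x, ∑ y, r x * c y / s ≤ s := by
    simp_rw [mul_div_assoc, ← Finset.mul_sum, ← Finset.sum_mul, ← Finset.sum_div, hs_c, hs_r]
    rcases eq_or_ne s 0 with h | h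
    · simp [h]
    · rw [mul_div_cancel₀ _ h]
  have hlog_s : ∑ x, ∑ y, q x y * log s = s * log s := by simp_rw [← Finset.sum_mul]; rfl
  have hlog_r : ∑ x, ∑ y, q x y * log (r x) = ∑ x, r x * log (r x) := by
    simp_rw [← Finset.sum_mul]; rfl
  have hlog_c : ∑ x, ∑ y, q x y * log (c y) = ∑ y, c y * log (c y) := by
    rw [Finset.sum_comm]; simp_rw [← Finset.sum_mul]; rfl
  have total := Finset.sum_le_sum fun x (_ : x ∈ Finset.univ) =>
    Finset.sum_le_sum fun y (_ : y ∈ Finset.univ) => gibbs x y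
  simp only [Finset.sum_sub_distrib, Finset.sum_add_distrib, hlog_s, hlog_r, hlog_c] at total
  simp only [negMulLog, neg_mul, Finset.sum_neg_distrib]
  linarith

theorem sum_negMulLog_submodular {α β γ : Type*} [Fintype α] [Fintype β] [Fintype γ]
    (p : α → β → γ → ℝ) (hp : ∀ x y z, 0 ≤ p x y z) :
    ∑ x, ∑ y, ∑ z, negMulLog (p x y z) + ∑ z, negMulLog (∑ x, ∑ y, p x y z)
      ≤ ∑ x, ∑ z, negMulLog (∑ y, p x y z) + ∑ y, ∑ z, negMulLog (∑ x, p x y z) := by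
  have slices := Finset.sum_le_sum fun z (_ : z ∈ Finset.univ) =>
    sum_negMulLog_add_negMulLog_sum_le (fun x y => p x y z) (fun x y => hp x y z)
  have sum_comm₃ : ∀ F : α → β → γ → ℝ, ∑ x, ∑ y, ∑ z, F x y z = ∑ z, ∑ x, ∑ y, F x y z :=
    fun F => (Finset.sum_congr rfl fun x _ => Finset.sum_comm).trans Finset.sum_comm
  simp only [Finset.sum_add_distrib] at slices
  rw [sum_comm₃, Finset.sum_comm (f := fun x z => negMulLog (∑ y, p x y z)),
    Finset.sum_comm (f := fun y z => negMulLog (∑ x, p x y z))]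
  exact slices

theorem measureReal_preimage_eq_sum {Ω S T : Type*} [MeasurableSpace Ω] (μ : Measure Ω)
    [IsFiniteMeasure μ] [Fintype T] [MeasurableSpace S] [MeasurableSpace T]
    [MeasurableSingletonClass S] [MeasurableSingletonClass T] {X : Ω → S} {Y : Ω → T}
    (hX : Measurable X) (hY : Measurable Y) (x : S) :
    μ.real (X ⁻¹' {x}) = ∑ y, μ.real ((fun ω => (X ω, Y ω)) ⁻¹' {(x, y)}) := by
  have fibers : X ⁻¹' {x} = ⋃ y ∈ Finset.univ, (fun ω => (X ω, Y ω)) ⁻¹' {(x, y)} := by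
    ext ω; simp
  rw [fibers, measureReal_biUnion_finset]
  · intro y _ y' _ hne
    exact Set.disjoint_left.2 fun ω h h' => hne (by simp_all)
  · exact fun y _ => hX.prodMk hY (measurableSet_singleton _)

section Identities

variable {Ω : Type*} [MeasurableSpace Ω] (μ : Measure Ω)
  {S T R A B : Type*} [Fintype S] [Fintype T] [Fintype R] [Fintype A] [Fintype B]

theorem entropy_comp_of_injective (X : Ω → S) {f : S → T} (hf : Function.Injective f) :
    entropy μ (fun ω => f (X ω)) = entropy μ X := by
  refine (Fintype.sum_of_injective f hf _ _ (fun t ht => ?_) fun s => ?_).symm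
  · have : (fun ω => f (X ω)) ⁻¹' {t} = ∅ :=
      Set.eq_empty_of_forall_notMem fun ω h => ht ⟨X ω, h⟩
    simp [this]
  · simp only [Set.preimage, Set.mem_singleton_iff, hf.eq_iff]

theorem entropy_congr {X : Ω → S} {Y : Ω → T} (f : S → T) (g : T → S)
    (hf : ∀ ω, Y ω = f (X ω)) (hg : ∀ ω, X ω = g (Y ω)) : entropy μ X = entropy μ Y := by
  calc entropy μ X = entropy μ (fun ω => (X ω, f (X ω))) :=
        (entropy_comp_of_injective μ X (f := fun s => (s, f s))
          fun _ _ h => congrArg Prod.fst h).symm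
    _ = entropy μ (fun ω => Prod.swap (Y ω, g (Y ω))) := by
      congr 1; funext ω; rw [Prod.swap_prod_mk, ← hf, ← hg]
    _ = entropy μ Y := by
      rw [entropy_comp_of_injective μ _ Prod.swap_injective]
      exact entropy_comp_of_injective μ Y (f := fun t => (t, g t))
        fun _ _ h => congrArg Prod.fst h

theorem condMutualInfo_comm (X : Ω → S) (Y : Ω → T) (Z : Ω → R) :
    condMutualInfo μ X Y Z = condMutualInfo μ Y X Z := by
  have swap : entropy μ (fun ω => (X ω, Y ω, Z ω)) = entropy μ (fun ω => (Y ω, X ω, Z ω)) :=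
    entropy_congr μ (fun s => (s.2.1, s.1, s.2.2)) (fun s => (s.2.1, s.1, s.2.2))
      (fun _ => rfl) fun _ => rfl
  simp only [condMutualInfo, swap]
  ring

theorem condMutualInfo_congr_right (X : Ω → S) (Y : Ω → T) {Z : Ω → R} {Z' : Ω → A}
    (f : R → A) (g : A → R) (hf : ∀ ω, Z' ω = f (Z ω)) (hg : ∀ ω, Z ω = g (Z' ω)) :
    condMutualInfo μ X Y Z = condMutualInfo μ X Y Z' := by
  have hXZ := entropy_congr μ (X := fun ω => (X ω, Z ω)) (Y := fun ω => (X ω, Z' ω))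
    (fun s => (s.1, f s.2)) (fun s => (s.1, g s.2)) (fun ω => by simp [hf]) fun ω => by simp [hg]
  have hYZ := entropy_congr μ (X := fun ω => (Y ω, Z ω)) (Y := fun ω => (Y ω, Z' ω))
    (fun s => (s.1, f s.2)) (fun s => (s.1, g s.2)) (fun ω => by simp [hf]) fun ω => by simp [hg]
  have hXYZ := entropy_congr μ (X := fun ω => (X ω, Y ω, Z ω))
    (Y := fun ω => (X ω, Y ω, Z' ω)) (fun s => (s.1, s.2.1, f s.2.2))
    (fun s => (s.1, s.2.1, g s.2.2)) (fun ω => by simp [hf]) fun ω => by simp [hg]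
  simp only [condMutualInfo, hXZ, hYZ, hXYZ, entropy_congr μ f g hf hg]

theorem condMutualInfo_chain_swap (X : Ω → S) (W : Ω → A) (Y : Ω → T) (Z : Ω → R) :
    condMutualInfo μ X Y Z + condMutualInfo μ W Y (fun ω => (X ω, Z ω))
      = condMutualInfo μ W Y Z + condMutualInfo μ X Y (fun ω => (W ω, Z ω)) := by
  have h₁ : entropy μ (fun ω => (X ω, Y ω, Z ω)) = entropy μ (fun ω => (Y ω, X ω, Z ω)) :=
    entropy_congr μ (fun s => (s.2.1, s.1, s.2.2)) (fun s => (s.2.1, s.1, s.2.2))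
      (fun _ => rfl) fun _ => rfl
  have h₂ : entropy μ (fun ω => (W ω, Y ω, Z ω)) = entropy μ (fun ω => (Y ω, W ω, Z ω)) :=
    entropy_congr μ (fun s => (s.2.1, s.1, s.2.2)) (fun s => (s.2.1, s.1, s.2.2))
      (fun _ => rfl) fun _ => rfl
  have h₃ : entropy μ (fun ω => (W ω, X ω, Z ω)) = entropy μ (fun ω => (X ω, W ω, Z ω)) :=
    entropy_congr μ (fun s => (s.2.1, s.1, s.2.2)) (fun s => (s.2.1, s.1, s.2.2))
      (fun _ => rfl) fun _ => rfl
  have h₄ : entropy μ (fun ω => (W ω, Y ω, X ω, Z ω))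
      = entropy μ (fun ω => (X ω, Y ω, W ω, Z ω)) :=
    entropy_congr μ (fun s => (s.2.2.1, s.2.1, s.1, s.2.2.2))
      (fun s => (s.2.2.1, s.2.1, s.1, s.2.2.2)) (fun _ => rfl) fun _ => rfl
  simp only [condMutualInfo, h₁, h₂, h₃, h₄]
  ring

theorem mutualInfo_prod_left (X : Ω → S) (W : Ω → A) (Y : Ω → T) :
    mutualInfo μ (fun ω => (X ω, W ω)) Y = mutualInfo μ W Y + condMutualInfo μ X Y W := by
  have h₁ : entropy μ (fun ω => (Y ω, W ω)) = entropy μ (fun ω => (W ω, Y ω)) :=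
    entropy_congr μ Prod.swap Prod.swap (fun _ => rfl) fun _ => rfl
  have h₂ : entropy μ (fun ω => ((X ω, W ω), Y ω)) = entropy μ (fun ω => (X ω, Y ω, W ω)) :=
    entropy_congr μ (fun s => (s.1.1, s.2, s.1.2)) (fun s => ((s.1, s.2.2), s.2.1))
      (fun _ => rfl) fun _ => rfl
  simp only [mutualInfo, condMutualInfo, h₁, h₂]
  ring

theorem condMutualInfo_unit_eq_mutualInfo [IsProbabilityMeasure μ] (X : Ω → S) (Y : Ω → T) :
    condMutualInfo μ X Y (fun _ => ()) = mutualInfo μ X Y := by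
  have h₁ : entropy μ (fun ω => (X ω, ())) = entropy μ X :=
    entropy_congr μ Prod.fst (·, ()) (fun _ => rfl) fun _ => rfl
  have h₂ : entropy μ (fun ω => (Y ω, ())) = entropy μ Y :=
    entropy_congr μ Prod.fst (·, ()) (fun _ => rfl) fun _ => rfl
  have h₃ : entropy μ (fun ω => (X ω, Y ω, ())) = entropy μ (fun ω => (X ω, Y ω)) :=
    entropy_congr μ (fun s => (s.1, s.2.1)) (fun s => (s.1, s.2, ())) (fun _ => rfl) fun _ => rfl
  have h₄ : entropy μ (fun _ => ()) = 0 := by simp [entropy]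
  simp only [condMutualInfo, mutualInfo, h₁, h₂, h₃, h₄]
  ring

theorem condMutualInfo_exchange (U : Ω → S) (V : Ω → T) (Y₁ : Ω → A) (Y₂ : Ω → B)
    (Z : Ω → R) :
    condMutualInfo μ V Y₂ Z + condMutualInfo μ U Y₁ (fun ω => (V ω, Z ω))
        + condMutualInfo μ U V (fun ω => (Y₂ ω, Z ω))
      = condMutualInfo μ U Y₁ Z + condMutualInfo μ V Y₂ (fun ω => (U ω, Z ω))
        + condMutualInfo μ U V (fun ω => (Y₁ ω, Z ω)) := by
  have h₁ := condMutualInfo_chain_swap μ V Y₁ U Z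
  have h₂ := condMutualInfo_chain_swap μ U Y₂ V Z
  simp only [condMutualInfo_comm μ _ U] at h₁
  simp only [condMutualInfo_comm μ Y₂ V] at h₂
  linarith

end Identities

section Inequalities

variable {Ω : Type*} [MeasurableSpace Ω] (μ : Measure Ω)
  {S T R A : Type*} [Fintype S] [Fintype T] [Fintype R] [Fintype A]
  [MeasurableSpace S] [MeasurableSpace T] [MeasurableSpace R] [MeasurableSpace A]
  [MeasurableSingletonClass S] [MeasurableSingletonClass T] [MeasurableSingletonClass R]
  [MeasurableSingletonClass A]

theorem condMutualInfo_nonneg [IsFiniteMeasure μ] {X : Ω → S} {Y : Ω → T} {Z : Ω → R}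
    (hX : Measurable X) (hY : Measurable Y) (hZ : Measurable Z) : 0 ≤ condMutualInfo μ X Y Z := by
  set p : S → T → R → ℝ := fun x y z => μ.real ((fun ω => (X ω, Y ω, Z ω)) ⁻¹' {(x, y, z)})
  have hXYZ : entropy μ (fun ω => (X ω, Y ω, Z ω)) = ∑ x, ∑ y, ∑ z, negMulLog (p x y z) := by
    simp only [entropy, Fintype.sum_prod_type]; rfl
  have hXZ : entropy μ (fun ω => (X ω, Z ω)) = ∑ x, ∑ z, negMulLog (∑ y, p x y z) := by
    simp only [entropy, Fintype.sum_prod_type, ← measureReal_def,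
      measureReal_preimage_eq_sum μ (hX.prodMk hZ) hY]
    congr! 6 with x _ z _ y
    ext ω; simp only [Set.mem_preimage, Set.mem_singleton_iff, Prod.mk.injEq]; tauto
  have hYZ : entropy μ (fun ω => (Y ω, Z ω)) = ∑ y, ∑ z, negMulLog (∑ x, p x y z) := by
    simp only [entropy, Fintype.sum_prod_type, ← measureReal_def,
      measureReal_preimage_eq_sum μ (hY.prodMk hZ) hX]
    congr! 6 with y _ z _ x
    ext ω; simp only [Set.mem_preimage, Set.mem_singleton_iff, Prod.mk.injEq]; tauto
  have hZ : entropy μ Z = ∑ z, negMulLog (∑ x, ∑ y, p x y z) := by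
    simp only [entropy, ← measureReal_def, measureReal_preimage_eq_sum μ hZ (hX.prodMk hY),
      Fintype.sum_prod_type]
    congr! 6 with z _ x _ y
    ext ω; simp only [Set.mem_preimage, Set.mem_singleton_iff, Prod.mk.injEq]; tauto
  have := sum_negMulLog_submodular p fun _ _ _ => measureReal_nonneg
  rw [condMutualInfo, hXYZ, hXZ, hYZ, hZ]
  linarith

theorem condMutualInfo_le_mutualInfo_prod [IsProbabilityMeasure μ] {S' : Type*} [Fintype S']
    (X : Ω → S') {W : Ω → A} {Y : Ω → T} (hW : Measurable W) (hY : Measurable Y) :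
    condMutualInfo μ X Y W ≤ mutualInfo μ (fun ω => (X ω, W ω)) Y := by
  have := condMutualInfo_nonneg μ hW hY (measurable_const (a := ()))
  rw [condMutualInfo_unit_eq_mutualInfo] at this
  rw [mutualInfo_prod_left]
  linarith

theorem condMutualInfo_le_condMutualInfo_add [IsFiniteMeasure μ] {X : Ω → S} {W : Ω → A}
    {Y : Ω → T} {Z : Ω → R} (hX : Measurable X) (hW : Measurable W) (hY : Measurable Y)
    (hZ : Measurable Z) :
    condMutualInfo μ X Y Z
      ≤ condMutualInfo μ W Y Z + condMutualInfo μ X Y (fun ω => (W ω, Z ω)) := by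
  have := condMutualInfo_nonneg μ hW hY (hX.prodMk hZ)
  linarith [condMutualInfo_chain_swap μ X W Y Z]

end Inequalities

theorem stmt_4
    {Ω : Type*} [MeasurableSpace Ω] (μ : Measure Ω) [IsProbabilityMeasure μ]
    {SU SV SW₁ SW₂ SY₁ SY₂ : Type*}
    [Fintype SU] [MeasurableSpace SU] [MeasurableSingletonClass SU] [Fintype SV] [MeasurableSpace SV] [MeasurableSingletonClass SV] [Fintype SW₁] [MeasurableSpace SW₁] [MeasurableSingletonClass SW₁] [Fintype SW₂] [MeasurableSpace SW₂] [MeasurableSingletonClass SW₂] [Fintype SY₁] [MeasurableSpace SY₁] [MeasurableSingletonClass SY₁] [Fintype SY₂] [MeasurableSpace SY₂] [MeasurableSingletonClass SY₂]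
    (U : Ω → SU) (V : Ω → SV) (W₁ : Ω → SW₁) (W₂ : Ω → SW₂) (Y₁ : Ω → SY₁) (Y₂ : Ω → SY₂)
    (hU : Measurable U) (hV : Measurable V) (hW₁ : Measurable W₁) (hW₂ : Measurable W₂) (hY₁ : Measurable Y₁) (hY₂ : Measurable Y₂)
    (h0 : condMutualInfo μ W₂ Y₁ (fun ω => (V ω, W₁ ω)) = condMutualInfo μ W₁ Y₂ (fun ω => (V ω, W₂ ω)))
    (h1 : condMutualInfo μ U Y₁ (fun ω => (V ω, W₁ ω)) = condMutualInfo μ U Y₁ W₁)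
    (h2 : condMutualInfo μ U V (fun ω => (W₁ ω, W₂ ω, Y₁ ω)) = condMutualInfo μ U V (fun ω => (W₁ ω, W₂ ω, Y₂ ω)))
    : condMutualInfo μ U Y₁ W₁ + condMutualInfo μ V Y₂ W₂ ≤ mutualInfo μ (fun ω => (W₁ ω, W₂ ω)) Y₂ + condMutualInfo μ U Y₁ (fun ω => (W₁ ω, W₂ ω)) + condMutualInfo μ V Y₂ (fun ω => (U ω, W₁ ω, W₂ ω)) := by
  have hU_Y₁ := condMutualInfo_le_condMutualInfo_add μ hU hW₂ hY₁ (hV.prodMk hW₁)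
  have hU_Y₁_cond : condMutualInfo μ U Y₁ (fun ω => (W₂ ω, V ω, W₁ ω))
      = condMutualInfo μ U Y₁ (fun ω => (V ω, W₁ ω, W₂ ω)) :=
    condMutualInfo_congr_right μ U Y₁ (fun s => (s.2.1, s.2.2, s.1))
      (fun s => (s.2.2, s.1, s.2.1)) (fun _ => rfl) fun _ => rfl
  have hV_Y₂ := condMutualInfo_chain_swap μ V W₁ Y₂ W₂
  have hW₁_Y₂ := condMutualInfo_le_mutualInfo_prod μ W₁ hW₂ hY₂
  have exchange := condMutualInfo_exchange μ U V Y₁ Y₂ (fun ω => (W₁ ω, W₂ ω))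
  have h2_cond₁ : condMutualInfo μ U V (fun ω => (W₁ ω, W₂ ω, Y₁ ω))
      = condMutualInfo μ U V (fun ω => (Y₁ ω, W₁ ω, W₂ ω)) :=
    condMutualInfo_congr_right μ U V (fun s => (s.2.2, s.1, s.2.1))
      (fun s => (s.2.1, s.2.2, s.1)) (fun _ => rfl) fun _ => rfl
  have h2_cond₂ : condMutualInfo μ U V (fun ω => (W₁ ω, W₂ ω, Y₂ ω))
      = condMutualInfo μ U V (fun ω => (Y₂ ω, W₁ ω, W₂ ω)) :=
    condMutualInfo_congr_right μ U V (fun s => (s.2.2, s.1, s.2.1))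
      (fun s => (s.2.1, s.2.2, s.1)) (fun _ => rfl) fun _ => rfl
  linarith
end

section
/- (Csiszár sum identity) Let n be a positive integer and let Y₁ᵢ (i = 1,…,n) and Y₂ᵢ (i = 1,…,n) be random variables on a common probability space taking values in finite sets. Then ∑_{i=1}^{n} I(Y₂₍ᵢ₊₁₎ⁿ ; Y₁ᵢ | Y₁^{i−1}) = ∑_{i=1}^{n} I(Y₁^{i−1} ; Y₂ᵢ | Y₂₍ᵢ₊₁₎ⁿ), where Y₁^{i−1} denotes the tuple (Y₁₁,…,Y₁₍ᵢ₋₁₎) and Y₂₍ᵢ₊₁₎ⁿ denotes the tuple (Y₂₍ᵢ₊₁₎,…,Y₂ₙ); for i = 1 the conditioning on Y₁⁰ is vacuous (unconditional mutual information), and for i = n the random variable Y₂₍ₙ₊₁₎ⁿ is a constant (so the corresponding mutual information term is 0). -/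
/-!
Write `H(a, b)` for the joint entropy of the first `a` of the `Y₁`'s together with the `Y₂`'s from
index `b` on. Every entropy occurring in either side is some `H(a, b)`, because a tuple of
coordinates carries exactly the information of the concatenated tuple. Expanding the conditional
mutual informations, the `i`-th summands become `H(i, i+1) + H(i+1, n) - H(i+1, i+1) - H(i, n)` and
`H(i, i+1) + H(0, i) - H(i, i) - H(0, i+1)`, and the two sums agree by telescoping.
-/

open MeasureTheory Real

open Function Finset

theorem entropy_eq_of_injective {Ω : Type*} [MeasurableSpace Ω] (μ : Measure Ω)
    {S T : Type*} [Fintype S] [Fintype T] {X : Ω → S} {Y : Ω → T}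
    (f : S → T) (hf : Injective f) (hY : Y = f ∘ X) :
    entropy μ Y = entropy μ X := by
  classical
  subst hY
  unfold entropy
  rw [← sum_subset (subset_univ (univ.image f)), sum_image fun x _ y _ h => hf h]
  · refine sum_congr rfl fun x _ => ?_
    rw [Set.preimage_comp, ← Set.image_singleton, hf.preimage_image]
  · intro y _ hy
    have hempty : (f ∘ X) ⁻¹' {y} = ∅ :=
      Set.eq_empty_of_forall_notMem fun ω hω => hy (mem_image.2 ⟨X ω, mem_univ _, hω⟩)
    simp [hempty]

namespace Fin

variable {n : ℕ} {S : Fin n → Type*}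

instance : IsEmpty {j : Fin n // n ≤ (j : ℕ)} := ⟨fun j => j.2.not_gt j.1.isLt⟩

instance : IsEmpty {j : Fin n // (j : ℕ) < 0} := ⟨fun j => Nat.not_lt_zero _ j.2⟩

def splitLtSucc (i : Fin n) (p : ∀ j : {j : Fin n // (j : ℕ) < i + 1}, S j) :
    S i × ∀ j : {j : Fin n // (j : ℕ) < i}, S j :=
  (p ⟨i, Nat.lt_succ_self _⟩, fun j => p ⟨j, Nat.lt_succ_of_lt j.2⟩)

def splitGe (i : Fin n) (p : ∀ j : {j : Fin n // (i : ℕ) ≤ j}, S j) :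
    S i × ∀ j : {j : Fin n // (i : ℕ) + 1 ≤ j}, S j :=
  (p ⟨i, le_rfl⟩, fun j => p ⟨j, Nat.le_of_succ_le j.2⟩)

theorem splitLtSucc_injective (i : Fin n) : Injective (splitLtSucc (S := S) i) := by
  intro p q h
  obtain ⟨hi, hlt⟩ := Prod.mk.inj h
  funext ⟨j, hj⟩
  rcases Nat.lt_succ_iff_lt_or_eq.mp hj with hj | hj
  · exact congrFun hlt ⟨j, hj⟩
  · obtain rfl : j = i := Fin.ext hj
    exact hi

theorem splitGe_injective (i : Fin n) : Injective (splitGe (S := S) i) := by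
  intro p q h
  obtain ⟨hi, hgt⟩ := Prod.mk.inj h
  funext ⟨j, hj⟩
  rcases Nat.eq_or_lt_of_le hj with hj | hj
  · obtain rfl : j = i := Fin.ext hj.symm
    exact hi
  · exact congrFun hgt ⟨j, hj⟩

end Fin

section PrefixSuffix

variable {Ω : Type*} [MeasurableSpace Ω] (μ : Measure Ω) {n : ℕ} {S₁ S₂ : Fin n → Type*}
  [∀ i, Fintype (S₁ i)] [∀ i, Fintype (S₂ i)] (Y₁ : ∀ i, Ω → S₁ i) (Y₂ : ∀ i, Ω → S₂ i)

/-- With 1-based indices as in the paper, `prefixSuffixEntropy μ Y₁ Y₂ a b = H(Y₁^a, Y₂_{b+1}^n)`. -/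
noncomputable def prefixSuffixEntropy (a b : ℕ) : ℝ :=
  entropy μ fun ω =>
    (fun j : {j : Fin n // (j : ℕ) < a} => Y₁ j ω, fun j : {j : Fin n // b ≤ (j : ℕ)} => Y₂ j ω)

local notation "H" => prefixSuffixEntropy μ Y₁ Y₂

/- The `rfl`s below hold because `j < i` in `Fin n` unfolds to `(j : ℕ) < i`, and `i < j` in `ℕ`
to `i + 1 ≤ j`. -/

theorem condMutualInfo_suffix_coord_prefix (i : Fin n) :
    condMutualInfo μ (fun ω => fun j : {j : Fin n // i < j} => Y₂ j ω)
        (Y₁ i) (fun ω => fun j : {j : Fin n // j < i} => Y₁ j ω)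
      = H i (i + 1) + H (i + 1) n - H (i + 1) (i + 1) - H i n := by
  unfold condMutualInfo prefixSuffixEntropy
  congr 1
  · congr 1
    · congr 1
      · exact entropy_eq_of_injective μ _ Prod.swap_injective rfl
      · exact entropy_eq_of_injective μ _
          ((Fin.splitLtSucc_injective i).comp Prod.fst_injective) rfl
    · exact entropy_eq_of_injective μ _
        (Prod.swap_injective.comp ((Fin.splitLtSucc_injective i).prodMap injective_id)) rfl
  · exact entropy_eq_of_injective μ _ Prod.fst_injective rfl

theorem condMutualInfo_prefix_coord_suffix (i : Fin n) :
    condMutualInfo μ (fun ω => fun j : {j : Fin n // j < i} => Y₁ j ω)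
        (Y₂ i) (fun ω => fun j : {j : Fin n // i < j} => Y₂ j ω)
      = H i (i + 1) + H 0 i - H i i - H 0 (i + 1) := by
  unfold condMutualInfo prefixSuffixEntropy
  congr 1
  · congr 1
    · congr 1
      exact entropy_eq_of_injective μ _ ((Fin.splitGe_injective i).comp Prod.snd_injective) rfl
    · exact entropy_eq_of_injective μ _ (injective_id.prodMap (Fin.splitGe_injective i)) rfl
  · exact entropy_eq_of_injective μ _ Prod.snd_injective rfl

end PrefixSuffix

theorem Finset.sum_range_csiszar {G : Type*} [AddCommGroup G] (F : ℕ → ℕ → G) (n : ℕ) :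
    ∑ t ∈ range n, (F t (t + 1) + F (t + 1) n - F (t + 1) (t + 1) - F t n)
      = ∑ t ∈ range n, (F t (t + 1) + F 0 t - F t t - F 0 (t + 1)) := by
  rw [← sub_eq_zero, ← sum_sub_distrib]
  calc _ = ∑ t ∈ range n, ((F (t + 1) n - F t n) - (F (t + 1) (t + 1) - F t t)
          + (F 0 (t + 1) - F 0 t)) := sum_congr rfl fun t _ => by abel
    _ = 0 := by
      rw [sum_add_distrib, sum_sub_distrib, sum_range_sub (fun t => F t n),
        sum_range_sub (fun t => F t t), sum_range_sub (F 0)]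
      abel

theorem stmt_6_general
    {Ω : Type*} [MeasurableSpace Ω] (μ : Measure Ω)
    (n : ℕ)
    {S₁ S₂ : Fin n → Type*}
    [∀ i, Fintype (S₁ i)]
    [∀ i, Fintype (S₂ i)]
    (Y₁ : ∀ i, Ω → S₁ i) (Y₂ : ∀ i, Ω → S₂ i) :
    ∑ i : Fin n,
        condMutualInfo μ (fun ω => fun j : {j : Fin n // i < j} => Y₂ j ω)
          (Y₁ i) (fun ω => fun j : {j : Fin n // j < i} => Y₁ j ω)
      = ∑ i : Fin n,
        condMutualInfo μ (fun ω => fun j : {j : Fin n // j < i} => Y₁ j ω)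
          (Y₂ i) (fun ω => fun j : {j : Fin n // i < j} => Y₂ j ω) := by
  set H := prefixSuffixEntropy μ Y₁ Y₂
  simp only [condMutualInfo_suffix_coord_prefix, condMutualInfo_prefix_coord_suffix]
  rw [Fin.sum_univ_eq_sum_range (fun t => H t (t + 1) + H (t + 1) n - H (t + 1) (t + 1) - H t n),
    Fin.sum_univ_eq_sum_range (fun t => H t (t + 1) + H 0 t - H t t - H 0 (t + 1))]
  exact sum_range_csiszar H n

/-- Csiszár sum identity. -/
theorem stmt_6
    {Ω : Type*} [MeasurableSpace Ω] (μ : Measure Ω) [IsProbabilityMeasure μ]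
    (n : ℕ) (hn : 0 < n)
    {S₁ S₂ : Fin n → Type*}
    [∀ i, Fintype (S₁ i)] [∀ i, MeasurableSpace (S₁ i)] [∀ i, MeasurableSingletonClass (S₁ i)]
    [∀ i, Fintype (S₂ i)] [∀ i, MeasurableSpace (S₂ i)] [∀ i, MeasurableSingletonClass (S₂ i)]
    (Y₁ : ∀ i, Ω → S₁ i) (Y₂ : ∀ i, Ω → S₂ i)
    (hY₁ : ∀ i, Measurable (Y₁ i)) (hY₂ : ∀ i, Measurable (Y₂ i)) :
    ∑ i : Fin n,
        condMutualInfo μ (fun ω => fun j : {j : Fin n // i < j} => Y₂ j ω)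
          (Y₁ i) (fun ω => fun j : {j : Fin n // j < i} => Y₁ j ω)
      = ∑ i : Fin n,
        condMutualInfo μ (fun ω => fun j : {j : Fin n // j < i} => Y₁ j ω)
          (Y₂ i) (fun ω => fun j : {j : Fin n // i < j} => Y₂ j ω) :=
  stmt_6_general μ n Y₁ Y₂
end
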